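/- Let θ ∈ ℝ \ {0} and β ≥ 0, and define m_{θ,β}(λ) = e^{iλ^θ} λ^{−θβ/2} for λ > 0 with λ^θ ≥ 1 and m_{θ,β}(λ) = 0 otherwise. Then m_{θ,β} belongs to the class 𝓜(θ,β); explicitly: (a) there is a constant C > 0 such that for every integer j with jθ > 0 one has sup_{λ>0} |m_{θ,β}(ν^j λ) φ(λ)| ≤ C ν^{−jθβ/2}; and (b) for every s ∈ ℕ there is a constant C_s > 0 such that for every integer j with jθ > 0 one has ‖(m_{θ,β})^j‖_{L²_s(ℝ₊)} ≤ C_s ν^{jθ(2s−β)/2}, where (m_{θ,β})^j(λ) = m_{θ,β}(ν^j λ) φ(λ). -/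

import Mathlib

open MeasureTheory Metric Set
open scoped ENNReal

noncomputable section

abbrev En (n : ℕ) := EuclideanSpace ℝ (Fin n)

/-- The Fourier multiplier operator `m(√(-Δ))` on `ℝⁿ` with radial symbol `ξ ↦ m ‖ξ‖`,
defined as the inverse Fourier transform of `ξ ↦ m ‖ξ‖ * 𝓕 f ξ`. -/
def multOp (n : ℕ) (m : ℝ → ℂ) (f : En n → ℂ) : En n → ℂ :=
  FourierTransformInv.fourierInv (fun ξ => m ‖ξ‖ * FourierTransform.fourier f ξ)

/-- `g'` is the weak derivative of `g` on `(0,∞)`. -/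
def IsWeakDerivOn (g g' : ℝ → ℂ) : Prop :=
  ∀ ψ : ℝ → ℂ, ContDiff ℝ (⊤ : ℕ∞) ψ → HasCompactSupport ψ → tsupport ψ ⊆ Set.Ioi (0 : ℝ) →
    ∫ t in Set.Ioi (0 : ℝ), g t * deriv ψ t = - ∫ t in Set.Ioi (0 : ℝ), g' t * ψ t

/-- `D` is a chain of weak derivatives of `g` of length `s` on `(0,∞)`. -/
def SobolevSeq (s : ℕ) (g : ℝ → ℂ) (D : ℕ → ℝ → ℂ) : Prop :=
  D 0 = g ∧ ∀ k < s, IsWeakDerivOn (D k) (D (k + 1))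

/-- The square of the Sobolev norm `‖g‖_{L²_s(ℝ₊)}²  = ∑_{k=0}^s ∫₀^∞ |g^{(k)}|²`,
computed from a chain `D` of weak derivatives of `g`. -/
def sobNormSq (s : ℕ) (D : ℕ → ℝ → ℂ) : ℝ :=
  ∑ k ∈ Finset.range (s + 1), ∫ t in Set.Ioi (0 : ℝ), ‖D k t‖ ^ 2

/-- The multiplier class `𝓜(θ,β)` (with respect to `ν` and the partition function `φ`):
`m` vanishes outside `{λ ≥ 0 : λ^θ ≥ 1}`, `sup_{jθ>0} ν^{jθβ/2} ‖m^j‖_∞ < ∞`, and for every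
`s ∈ ℕ`, `sup_{jθ>0} ν^{-jθ(2s-β)/2} ‖m^j‖_{L²_s(ℝ₊)} < ∞`, where `m^j(λ) = m(ν^j λ) φ(λ)`. -/
def MemMClass (ν : ℝ) (φ : ℝ → ℝ) (θ β : ℝ) (m : ℝ → ℂ) : Prop :=
  (∀ t : ℝ, ¬(0 ≤ t ∧ 1 ≤ t ^ θ) → m t = 0) ∧
  (∃ C > 0, ∀ j : ℤ, 0 < (j : ℝ) * θ → ∀ t > 0,
      ‖m (ν ^ j * t) * ((φ t : ℝ) : ℂ)‖ ≤ C * ν ^ (-((j : ℝ) * θ * β) / 2)) ∧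
  (∀ s : ℕ, ∃ C > 0, ∀ j : ℤ, 0 < (j : ℝ) * θ →
      ∃ D : ℕ → ℝ → ℂ, SobolevSeq s (fun t => m (ν ^ j * t) * ((φ t : ℝ) : ℂ)) D ∧
        sobNormSq s D ≤ C * ν ^ ((j : ℝ) * θ * (2 * s - β)))

/-- The oscillating multiplier `m_{θ,β}(λ) = e^{iλ^θ} λ^{-θβ/2}` for `λ > 0` with `λ^θ ≥ 1`,
and `0` otherwise. -/
def mExample (θ β : ℝ) : ℝ → ℂ := fun t =>
  if 0 < t ∧ 1 ≤ t ^ θ then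
    Complex.exp (Complex.I * ((t ^ θ : ℝ) : ℂ)) * (((t ^ (-(θ * β) / 2) : ℝ)) : ℂ)
  else 0

namespace MExAux

open MeasureTheory Set

/-- weight function `t ↦ t^{-(θβ)/2} φ(t)`. -/
noncomputable def wA (θ β : ℝ) (φ : ℝ → ℝ) : ℝ → ℂ :=
  fun t => ((t ^ (-(θ * β) / 2) : ℝ) : ℂ) * ((φ t : ℝ) : ℂ)

/-- coefficient functions in the expansion of iterated derivatives. -/
noncomputable def PA (θ β : ℝ) (φ : ℝ → ℝ) : ℕ → ℕ → ℝ → ℂ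
  | 0, 0 => wA θ β φ
  | 0, _ + 1 => fun _ => 0
  | k + 1, 0 => deriv (PA θ β φ k 0)
  | k + 1, i + 1 => fun t =>
      Complex.I * ((θ * t ^ (θ - 1) : ℝ) : ℂ) * PA θ β φ k i t
        + deriv (PA θ β φ k (i + 1)) t

/-- the model function `t ↦ e^{i a t^θ} w(t)`. -/
noncomputable def FA (θ β : ℝ) (φ : ℝ → ℝ) (a : ℝ) : ℝ → ℂ :=
  fun t => Complex.exp (Complex.I * ((a * t ^ θ : ℝ) : ℂ)) * wA θ β φ t

variable (θ β : ℝ) (φ : ℝ → ℝ)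

lemma contDiffOn_rpow (r : ℝ) :
    ContDiffOn ℝ (⊤ : ℕ∞) (fun t : ℝ => t ^ r) (Set.Ioi 0) := fun t ht =>
  (Real.contDiffAt_rpow_const_of_ne (ne_of_gt ht)).contDiffWithinAt

lemma contDiffOn_wA (hφ : ContDiff ℝ (⊤ : ℕ∞) φ) : ContDiffOn ℝ (⊤ : ℕ∞) (wA θ β φ) (Set.Ioi 0) :=
  (Complex.ofRealCLM.contDiff.comp_contDiffOn (contDiffOn_rpow _)).mul
    ((Complex.ofRealCLM.contDiff.comp hφ).contDiffOn)

lemma contDiffOn_uA : ContDiffOn ℝ (⊤ : ℕ∞)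
    (fun t : ℝ => Complex.I * ((θ * t ^ (θ - 1) : ℝ) : ℂ)) (Set.Ioi 0) := by
  apply contDiffOn_const.mul
  exact Complex.ofRealCLM.contDiff.comp_contDiffOn
    (contDiffOn_const.mul (contDiffOn_rpow _))

lemma contDiffOn_PA (hφ : ContDiff ℝ (⊤ : ℕ∞) φ) :
    ∀ k i, ContDiffOn ℝ (⊤ : ℕ∞) (PA θ β φ k i) (Set.Ioi 0) := by
  intro k
  induction k with
  | zero =>
    intro i
    match i with
    | 0 => exact contDiffOn_wA θ β φ hφ
    | i + 1 => exact contDiffOn_const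
  | succ k ih =>
    intro i
    match i with
    | 0 => exact (ih 0).deriv_of_isOpen isOpen_Ioi (by simp)
    | i + 1 =>
      exact ((contDiffOn_uA θ).mul (ih i)).add
        ((ih (i + 1)).deriv_of_isOpen isOpen_Ioi (by simp))

lemma PA_eq_zero_of_gt : ∀ k i, k < i → PA θ β φ k i = fun _ => 0 := by
  intro k
  induction k with
  | zero =>
    intro i hi
    match i, hi with
    | i + 1, _ => rfl
  | succ k ih =>
    intro i hi
    match i, hi with
    | i + 1, hi =>
      show (fun t => Complex.I * ((θ * t ^ (θ - 1) : ℝ) : ℂ) * PA θ β φ k i t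
        + deriv (PA θ β φ k (i + 1)) t) = fun _ => 0
      rw [ih i (by omega), ih (i + 1) (by omega)]
      funext t
      simp

lemma deriv_zero_of_locally_zero {f : ℝ → ℂ} {U : Set ℝ} (hU : IsOpen U)
    (hf : ∀ x ∈ U, f x = 0) {t : ℝ} (ht : t ∈ U) : deriv f t = 0 := by
  have hev : f =ᶠ[nhds t] fun _ => 0 := Filter.eventuallyEq_of_mem (hU.mem_nhds ht) hf
  rw [hev.deriv_eq]
  simp

variable (ν : ℝ)

lemma PA_vanish (hsupp : ∀ t ∉ Set.Icc ν⁻¹ ν, φ t = 0) :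
    ∀ k i, ∀ t ∉ Set.Icc ν⁻¹ ν, PA θ β φ k i t = 0 := by
  have hU : IsOpen (Set.Icc ν⁻¹ ν)ᶜ := isClosed_Icc.isOpen_compl
  intro k
  induction k with
  | zero =>
    intro i t ht
    match i with
    | 0 => show wA θ β φ t = 0; simp [wA, hsupp t ht]
    | i + 1 => rfl
  | succ k ih =>
    intro i t ht
    match i with
    | 0 =>
      show deriv (PA θ β φ k 0) t = 0
      exact deriv_zero_of_locally_zero hU (fun x hx => ih 0 x hx) ht
    | i + 1 =>
      show Complex.I * ((θ * t ^ (θ - 1) : ℝ) : ℂ) * PA θ β φ k i t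
        + deriv (PA θ β φ k (i + 1)) t = 0
      rw [ih i t ht, deriv_zero_of_locally_zero hU (fun x hx => ih (i + 1) x hx) ht]
      simp

lemma contDiffOn_FA (hφ : ContDiff ℝ (⊤ : ℕ∞) φ) (a : ℝ) :
    ContDiffOn ℝ (⊤ : ℕ∞) (FA θ β φ a) (Set.Ioi 0) := by
  apply ContDiffOn.mul ?_ (contDiffOn_wA θ β φ hφ)
  apply ContDiffOn.cexp
  exact contDiffOn_const.mul
    (Complex.ofRealCLM.contDiff.comp_contDiffOn (contDiffOn_const.mul (contDiffOn_rpow _)))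

lemma contDiffOn_iter_FA (hφ : ContDiff ℝ (⊤ : ℕ∞) φ) (a : ℝ) :
    ∀ k, ContDiffOn ℝ (⊤ : ℕ∞) (deriv^[k] (FA θ β φ a)) (Set.Ioi 0) := by
  intro k
  induction k with
  | zero => exact contDiffOn_FA θ β φ hφ a
  | succ k ih =>
    rw [Function.iterate_succ_apply']
    exact ih.deriv_of_isOpen isOpen_Ioi (by simp)

lemma iter_FA_vanish (hsupp : ∀ t ∉ Set.Icc ν⁻¹ ν, φ t = 0) (a : ℝ) :
    ∀ k, ∀ t ∉ Set.Icc ν⁻¹ ν, deriv^[k] (FA θ β φ a) t = 0 := by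
  have hU : IsOpen (Set.Icc ν⁻¹ ν)ᶜ := isClosed_Icc.isOpen_compl
  intro k
  induction k with
  | zero => intro t ht; simp [FA, wA, hsupp t ht]
  | succ k ih =>
    intro t ht
    rw [Function.iterate_succ_apply']
    exact deriv_zero_of_locally_zero hU (fun x hx => ih x hx) ht

lemma deriv_iter_FA (hφ : ContDiff ℝ (⊤ : ℕ∞) φ) (a : ℝ) :
    ∀ k, ∀ t ∈ Set.Ioi (0 : ℝ),
      deriv^[k] (FA θ β φ a) t
        = Complex.exp (Complex.I * ((a * t ^ θ : ℝ) : ℂ)) *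
            ∑ i ∈ Finset.range (k + 1), (a : ℂ) ^ i * PA θ β φ k i t := by
  intro k
  induction k with
  | zero =>
    intro t ht
    show FA θ β φ a t = _
    simp [FA, PA]
  | succ k ih =>
    intro t ht
    have ht0 : (0 : ℝ) < t := ht
    have hmem : Set.Ioi (0 : ℝ) ∈ nhds t := isOpen_Ioi.mem_nhds ht
    rw [Function.iterate_succ_apply']
    have hev : deriv^[k] (FA θ β φ a) =ᶠ[nhds t]
        fun x => Complex.exp (Complex.I * ((a * x ^ θ : ℝ) : ℂ)) *
          ∑ i ∈ Finset.range (k + 1), (a : ℂ) ^ i * PA θ β φ k i x :=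
      Filter.eventuallyEq_of_mem hmem (fun x hx => ih x hx)
    rw [hev.deriv_eq]
    have hrpow : HasDerivAt (fun x : ℝ => a * x ^ θ) (a * (θ * t ^ (θ - 1))) t :=
      (Real.hasDerivAt_rpow_const (Or.inl (ne_of_gt ht0))).const_mul a
    have hE : HasDerivAt (fun x : ℝ => Complex.exp (Complex.I * ((a * x ^ θ : ℝ) : ℂ)))
        (Complex.exp (Complex.I * ((a * t ^ θ : ℝ) : ℂ)) *
          (Complex.I * ((a * (θ * t ^ (θ - 1)) : ℝ) : ℂ))) t :=
      (hrpow.ofReal_comp.const_mul Complex.I).cexp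
    have hS : HasDerivAt
        (fun x => ∑ i ∈ Finset.range (k + 1), (a : ℂ) ^ i * PA θ β φ k i x)
        (∑ i ∈ Finset.range (k + 1), (a : ℂ) ^ i * deriv (PA θ β φ k i) t) t := by
      apply HasDerivAt.fun_sum
      intro i _
      exact (((contDiffOn_PA θ β φ hφ k i).differentiableOn
        (by simp)).differentiableAt hmem).hasDerivAt.const_mul _
    rw [(hE.fun_mul hS).deriv]
    have hzero : deriv (PA θ β φ k (k + 1)) t = 0 := by
      rw [PA_eq_zero_of_gt θ β φ k (k + 1) (Nat.lt_succ_self k)]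
      simp
    have key : (Complex.I * ((a * (θ * t ^ (θ - 1)) : ℝ) : ℂ)) *
          (∑ i ∈ Finset.range (k + 1), (a : ℂ) ^ i * PA θ β φ k i t)
        + ∑ i ∈ Finset.range (k + 1), (a : ℂ) ^ i * deriv (PA θ β φ k i) t
        = ∑ i ∈ Finset.range (k + 2), (a : ℂ) ^ i * PA θ β φ (k + 1) i t := by
      rw [Finset.sum_range_succ' (fun i => (a : ℂ) ^ i * PA θ β φ (k + 1) i t) (k + 1)]
      have h0 : (a : ℂ) ^ 0 * PA θ β φ (k + 1) 0 t = deriv (PA θ β φ k 0) t := by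
        show (a : ℂ) ^ 0 * deriv (PA θ β φ k 0) t = _
        simp
      have hstep : ∀ i ∈ Finset.range (k + 1),
          (a : ℂ) ^ (i + 1) * PA θ β φ (k + 1) (i + 1) t
            = (a : ℂ) ^ (i + 1) * (Complex.I * ((θ * t ^ (θ - 1) : ℝ) : ℂ) * PA θ β φ k i t)
              + (a : ℂ) ^ (i + 1) * deriv (PA θ β φ k (i + 1)) t := by
        intro i _
        show (a : ℂ) ^ (i + 1) * (Complex.I * ((θ * t ^ (θ - 1) : ℝ) : ℂ) * PA θ β φ k i t
          + deriv (PA θ β φ k (i + 1)) t) = _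
        ring
      rw [h0, Finset.sum_congr rfl hstep, Finset.sum_add_distrib]
      have h2 : (∑ i ∈ Finset.range (k + 1), (a : ℂ) ^ (i + 1) * deriv (PA θ β φ k (i + 1)) t)
          = ∑ i ∈ Finset.range k, (a : ℂ) ^ (i + 1) * deriv (PA θ β φ k (i + 1)) t := by
        rw [Finset.sum_range_succ, hzero, mul_zero, add_zero]
      have h3 : (∑ i ∈ Finset.range k, (a : ℂ) ^ (i + 1) * deriv (PA θ β φ k (i + 1)) t)
            + (a : ℂ) ^ 0 * deriv (PA θ β φ k 0) t
          = ∑ i ∈ Finset.range (k + 1), (a : ℂ) ^ i * deriv (PA θ β φ k i) t :=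
        (Finset.sum_range_succ' (fun i => (a : ℂ) ^ i * deriv (PA θ β φ k i) t) k).symm
      have h4 : (∑ i ∈ Finset.range (k + 1),
            (a : ℂ) ^ (i + 1) * (Complex.I * ((θ * t ^ (θ - 1) : ℝ) : ℂ) * PA θ β φ k i t))
          = (Complex.I * ((a * (θ * t ^ (θ - 1)) : ℝ) : ℂ)) *
              ∑ i ∈ Finset.range (k + 1), (a : ℂ) ^ i * PA θ β φ k i t := by
        rw [Finset.mul_sum]
        apply Finset.sum_congr rfl
        intro i _
        push_cast
        ring
      rw [h2, h4]
      rw [show ((a : ℂ) ^ 0 * deriv (PA θ β φ k 0) t) = deriv (PA θ β φ k 0) t by simp] at h3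
      rw [add_assoc, add_comm
        (∑ i ∈ Finset.range k, (a : ℂ) ^ (i + 1) * deriv (PA θ β φ k (i + 1)) t)
        (deriv (PA θ β φ k 0) t), add_comm] at *
      rw [← h3]
      ring
    rw [← key]
    ring

lemma iter_FA_bound (θ β : ℝ) (φ : ℝ → ℝ) (ν : ℝ) (hν : 1 < ν)
    (hφ : ContDiff ℝ (⊤ : ℕ∞) φ) (hsupp : ∀ t ∉ Set.Icc ν⁻¹ ν, φ t = 0) :
    ∀ k, ∃ M, 0 ≤ M ∧ ∀ a : ℝ, 1 ≤ a → ∀ t ∈ Set.Ioi (0 : ℝ),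
      ‖deriv^[k] (FA θ β φ a) t‖ ≤ M * a ^ k := by
  have hν0 : (0 : ℝ) < ν := lt_trans one_pos hν
  have hIcc : Set.Icc ν⁻¹ ν ⊆ Set.Ioi (0 : ℝ) :=
    fun x hx => lt_of_lt_of_le (inv_pos.2 hν0) hx.1
  intro k
  have hPb : ∀ i : ℕ, ∃ B, 0 ≤ B ∧ ∀ t ∈ Set.Ioi (0 : ℝ), ‖PA θ β φ k i t‖ ≤ B := by
    intro i
    obtain ⟨B, hB⟩ := (isCompact_Icc (a := ν⁻¹) (b := ν)).exists_bound_of_continuousOn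
      ((contDiffOn_PA θ β φ hφ k i).continuousOn.mono hIcc)
    refine ⟨max B 0, le_max_right _ _, fun t ht => ?_⟩
    by_cases htI : t ∈ Set.Icc ν⁻¹ ν
    · exact (hB t htI).trans (le_max_left _ _)
    · rw [PA_vanish θ β φ ν hsupp k i t htI]; simp
  choose B hB0 hBb using hPb
  refine ⟨∑ i ∈ Finset.range (k + 1), B i,
    Finset.sum_nonneg (fun i _ => hB0 i), fun a ha t ht => ?_⟩
  rw [deriv_iter_FA θ β φ hφ a k t ht, norm_mul]
  have ha0 : (0 : ℝ) ≤ a := le_trans zero_le_one ha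
  have hE1 : ‖Complex.exp (Complex.I * ((a * t ^ θ : ℝ) : ℂ))‖ = 1 := by
    rw [Complex.norm_exp]
    simp
  rw [hE1, one_mul]
  calc ‖∑ i ∈ Finset.range (k + 1), (a : ℂ) ^ i * PA θ β φ k i t‖
      ≤ ∑ i ∈ Finset.range (k + 1), ‖(a : ℂ) ^ i * PA θ β φ k i t‖ := norm_sum_le _ _
    _ ≤ ∑ i ∈ Finset.range (k + 1), B i * a ^ k := by
        apply Finset.sum_le_sum
        intro i hi
        rw [norm_mul, norm_pow, Complex.norm_real, Real.norm_eq_abs, abs_of_nonneg ha0]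
        have h1 : a ^ i ≤ a ^ k :=
          pow_le_pow_right₀ ha (Nat.lt_succ_iff.1 (Finset.mem_range.1 hi))
        have h2 : ‖PA θ β φ k i t‖ ≤ B i := hBb i t ht
        calc a ^ i * ‖PA θ β φ k i t‖ ≤ a ^ k * B i := by
              apply mul_le_mul h1 h2 (norm_nonneg _) (pow_nonneg ha0 k)
          _ = B i * a ^ k := mul_comm _ _
    _ = (∑ i ∈ Finset.range (k + 1), B i) * a ^ k := (Finset.sum_mul _ _ _).symm

lemma rpow_base_bound {ν : ℝ} (hν : 1 < ν) {t : ℝ} (ht : t ∈ Set.Icc ν⁻¹ ν) (r : ℝ) :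
    t ^ r ≤ ν ^ |r| := by
  have hν0 : (0 : ℝ) < ν := lt_trans one_pos hν
  have ht0 : 0 < t := lt_of_lt_of_le (inv_pos.2 hν0) ht.1
  rcases le_or_gt 0 r with hr | hr
  · rw [abs_of_nonneg hr]
    exact Real.rpow_le_rpow ht0.le ht.2 hr
  · rw [abs_of_neg hr]
    have h1 : t ^ r ≤ (ν⁻¹) ^ r :=
      Real.rpow_le_rpow_of_nonpos (inv_pos.2 hν0) ht.1 hr.le
    calc t ^ r ≤ (ν⁻¹) ^ r := h1
      _ = ν ^ (-r) := by
          rw [Real.inv_rpow hν0.le, ← Real.rpow_neg hν0.le]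
lemma cond_holds {ν θ : ℝ} (hν : 1 < ν) {j : ℤ} (hjθ : 0 < (j : ℝ) * θ) {t : ℝ}
    (ht : t ∈ Set.Icc ν⁻¹ ν) : 1 ≤ (ν ^ j * t) ^ θ := by
  have hν0 : (0 : ℝ) < ν := lt_trans one_pos hν
  have ht0 : 0 < t := lt_of_lt_of_le (inv_pos.2 hν0) ht.1
  have hzpos : (0 : ℝ) < ν ^ j := zpow_pos hν0 j
  rw [Real.mul_rpow hzpos.le ht0.le, ← Real.rpow_intCast ν j, ← Real.rpow_mul hν0.le]
  have hθne : θ ≠ 0 := by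
    intro h; rw [h, mul_zero] at hjθ; exact lt_irrefl 0 hjθ
  rcases lt_or_gt_of_ne hθne with hneg | hpos
  · -- θ < 0 : use t ≤ ν
    have hj : (j : ℝ) ≤ -1 := by
      have hj0 : (j : ℝ) < 0 := by nlinarith
      have : j < 0 := by exact_mod_cast hj0
      have : j ≤ -1 := by omega
      exact_mod_cast this
    have h1 : ν ^ θ ≤ t ^ θ := Real.rpow_le_rpow_of_nonpos ht0 ht.2 hneg.le
    have hexp : (0 : ℝ) ≤ (j : ℝ) * θ + θ := by nlinarith
    calc (1 : ℝ) = ν ^ (0 : ℝ) := (Real.rpow_zero ν).symm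
      _ ≤ ν ^ ((j : ℝ) * θ + θ) := Real.rpow_le_rpow_of_exponent_le hν.le hexp
      _ = ν ^ ((j : ℝ) * θ) * ν ^ θ := Real.rpow_add hν0 _ _
      _ ≤ ν ^ ((j : ℝ) * θ) * t ^ θ := by
          apply mul_le_mul_of_nonneg_left h1 (Real.rpow_nonneg hν0.le _)
  · -- θ > 0 : use ν⁻¹ ≤ t
    have hj : (1 : ℝ) ≤ (j : ℝ) := by
      have hj0 : (0 : ℝ) < (j : ℝ) := by nlinarith
      have : 0 < j := by exact_mod_cast hj0
      have : 1 ≤ j := by omega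
      exact_mod_cast this
    have h1 : ν ^ (-θ) ≤ t ^ θ := by
      have := Real.rpow_le_rpow (inv_pos.2 hν0).le ht.1 hpos.le
      calc ν ^ (-θ) = (ν⁻¹) ^ θ := by rw [Real.inv_rpow hν0.le, ← Real.rpow_neg hν0.le]
        _ ≤ t ^ θ := this
    have hexp : (0 : ℝ) ≤ (j : ℝ) * θ + -θ := by nlinarith
    calc (1 : ℝ) = ν ^ (0 : ℝ) := (Real.rpow_zero ν).symm
      _ ≤ ν ^ ((j : ℝ) * θ + -θ) := Real.rpow_le_rpow_of_exponent_le hν.le hexp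
      _ = ν ^ ((j : ℝ) * θ) * ν ^ (-θ) := Real.rpow_add hν0 _ _
      _ ≤ ν ^ ((j : ℝ) * θ) * t ^ θ := by
          apply mul_le_mul_of_nonneg_left h1 (Real.rpow_nonneg hν0.le _)

lemma sq_integral_le {ν : ℝ} (hν : 1 < ν) {f : ℝ → ℂ}
    (hc : ContinuousOn f (Set.Ioi 0))
    (hvan : ∀ t ∉ Set.Icc ν⁻¹ ν, f t = 0) {B : ℝ}
    (hB : ∀ t ∈ Set.Ioi (0 : ℝ), ‖f t‖ ≤ B) :
    (∫ t in Set.Ioi (0 : ℝ), ‖f t‖ ^ 2) ≤ B ^ 2 * (ν - ν⁻¹) := by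
  have hν0 : (0 : ℝ) < ν := lt_trans one_pos hν
  have hinv0 : (0 : ℝ) < ν⁻¹ := inv_pos.2 hν0
  have hinvlt : ν⁻¹ ≤ ν := le_of_lt (lt_trans (inv_lt_one_of_one_lt₀ hν) hν)
  have hIcc : Set.Icc ν⁻¹ ν ⊆ Set.Ioi (0 : ℝ) := fun x hx => lt_of_lt_of_le hinv0 hx.1
  have h1 : (∫ t in Set.Ioi (0 : ℝ), ‖f t‖ ^ 2) = ∫ t in Set.Icc ν⁻¹ ν, ‖f t‖ ^ 2 := by
    rw [setIntegral_eq_integral_of_forall_compl_eq_zero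
        (f := fun t => ‖f t‖ ^ 2) (fun t ht => ?_),
      ← setIntegral_eq_integral_of_forall_compl_eq_zero
        (s := Set.Icc ν⁻¹ ν) (f := fun t => ‖f t‖ ^ 2) (fun t ht => ?_)]
    · simp [hvan t ht]
    · have htn : t ∉ Set.Icc ν⁻¹ ν := fun h => ht (hIcc h)
      simp [hvan t htn]
  rw [h1]
  have hBnn : 0 ≤ B := le_trans (norm_nonneg _)
    (hB ν (hIcc ⟨hinvlt, le_refl ν⟩))
  have hint : IntegrableOn (fun t => ‖f t‖ ^ 2) (Set.Icc ν⁻¹ ν) := by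
    apply ContinuousOn.integrableOn_compact isCompact_Icc
    exact ((hc.mono hIcc).norm.pow 2)
  calc (∫ t in Set.Icc ν⁻¹ ν, ‖f t‖ ^ 2) ≤ ∫ _t in Set.Icc ν⁻¹ ν, B ^ 2 := by
        apply setIntegral_mono_on hint (integrableOn_const measure_Icc_lt_top.ne)
          measurableSet_Icc
        intro t ht
        exact pow_le_pow_left₀ (norm_nonneg _) (hB t (hIcc ht)) 2
    _ = B ^ 2 * (ν - ν⁻¹) := by
        rw [setIntegral_const, Real.volume_real_Icc_of_le hinvlt, smul_eq_mul,
          mul_comm]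

lemma isWeakDerivOn_of_hasDerivAt {G G' : ℝ → ℂ}
    (hd : ∀ t ∈ Set.Ioi (0 : ℝ), HasDerivAt G (G' t) t)
    (hc' : ContinuousOn G' (Set.Ioi (0 : ℝ))) :
    IsWeakDerivOn G G' := by
  intro ψ hψ hψc hψs
  rcases Set.eq_empty_or_nonempty (tsupport ψ) with hK | hK
  · have h0 : ψ = fun _ => (0 : ℂ) := funext fun x =>
      image_eq_zero_of_notMem_tsupport (by rw [hK]; exact Set.notMem_empty x)
    rw [h0]
    simp
  · have hKc : IsCompact (tsupport ψ) := hψc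
    set A := sInf (tsupport ψ) with hA
    set Bb := sSup (tsupport ψ) with hBdef
    have haK : A ∈ tsupport ψ := hKc.sInf_mem hK
    have hbK : Bb ∈ tsupport ψ := hKc.sSup_mem hK
    have ha0 : (0 : ℝ) < A := hψs haK
    have hle : ∀ x ∈ tsupport ψ, A ≤ x ∧ x ≤ Bb := fun x hx =>
      ⟨csInf_le hKc.bddBelow hx, le_csSup hKc.bddAbove hx⟩
    have hABb : A ≤ Bb := (hle A haK).2
    set p := A / 2 with hp
    set q := Bb + 1 with hq
    have hp0 : 0 < p := by rw [hp]; linarith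
    have hpA : p < A := by rw [hp]; linarith
    have hpq : p ≤ q := by rw [hp, hq]; linarith
    have huIcc : Set.uIcc p q = Set.Icc p q := Set.uIcc_of_le hpq
    have hIoi : Set.Icc p q ⊆ Set.Ioi (0 : ℝ) := fun x hx => lt_of_lt_of_le hp0 hx.1
    have hsupp_sub : tsupport ψ ⊆ Set.Ioc p q := fun x hx =>
      ⟨lt_of_lt_of_le hpA (hle x hx).1, le_trans (hle x hx).2 (by rw [hq]; linarith)⟩
    have hψd : ∀ x, HasDerivAt ψ (deriv ψ x) x := fun x =>
      ((hψ.differentiable (by simp)) x).hasDerivAt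
    have hψcont : Continuous ψ := hψ.continuous
    have hψ'cont : Continuous (deriv ψ) := hψ.continuous_deriv (by simp)
    have hGcont : ContinuousOn G (Set.Ioi 0) := fun x hx =>
      (hd x hx).continuousAt.continuousWithinAt
    have e1 : (∫ t in Set.Ioi (0 : ℝ), G t * deriv ψ t) = ∫ t in p..q, G t * deriv ψ t := by
      have hsub : Function.support (fun t => G t * deriv ψ t) ⊆ Set.Ioc p q := by
        intro x hx
        have hx' : deriv ψ x ≠ 0 := by
          intro h
          apply hx
          show G x * deriv ψ x = 0
          rw [h, mul_zero]
        exact hsupp_sub (support_deriv_subset (Function.mem_support.2 hx'))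
      rw [intervalIntegral.integral_eq_integral_of_support_subset hsub,
        setIntegral_eq_integral_of_forall_compl_eq_zero (fun x hx => ?_)]
      have hxn : x ∉ Function.support (fun t => G t * deriv ψ t) :=
        fun hmem => hx (lt_trans hp0 (hsub hmem).1)
      exact Function.notMem_support.1 hxn
    have e2 : (∫ t in Set.Ioi (0 : ℝ), G' t * ψ t) = ∫ t in p..q, G' t * ψ t := by
      have hsub : Function.support (fun t => G' t * ψ t) ⊆ Set.Ioc p q := by
        intro x hx
        have hx' : ψ x ≠ 0 := by
          intro h
          apply hx
          show G' x * ψ x = 0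
          rw [h, mul_zero]
        exact hsupp_sub (subset_closure (Function.mem_support.2 hx'))
      rw [intervalIntegral.integral_eq_integral_of_support_subset hsub,
        setIntegral_eq_integral_of_forall_compl_eq_zero (fun x hx => ?_)]
      have hxn : x ∉ Function.support (fun t => G' t * ψ t) :=
        fun hmem => hx (lt_trans hp0 (hsub hmem).1)
      exact Function.notMem_support.1 hxn
    have hG'int : IntervalIntegrable G' volume p q :=
      (hc'.mono (by rw [huIcc]; exact hIoi)).intervalIntegrable
    have hψ'int : IntervalIntegrable (deriv ψ) volume p q :=
      (hψ'cont.continuousOn).intervalIntegrable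
    have hQ := intervalIntegral.integral_deriv_mul_eq_sub (u := G) (v := ψ)
      (u' := G') (v' := deriv ψ)
      (fun x hx => hd x (hIoi (by rwa [huIcc] at hx)))
      (fun x _ => hψd x) hG'int hψ'int
    have hψp : ψ p = 0 := image_eq_zero_of_notMem_tsupport
      (fun hmem => absurd (hle p hmem).1 (not_le.2 hpA))
    have hψq : ψ q = 0 := image_eq_zero_of_notMem_tsupport
      (fun hmem => by have := (hle q hmem).2; rw [hq] at this; linarith)
    rw [hψp, hψq, mul_zero, mul_zero, sub_zero] at hQ
    have hi1 : IntervalIntegrable (fun x => G' x * ψ x) volume p q :=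
      ((hc'.mono (by rw [huIcc]; exact hIoi)).mul
        hψcont.continuousOn).intervalIntegrable
    have hi2 : IntervalIntegrable (fun x => G x * deriv ψ x) volume p q :=
      ((hGcont.mono (by rw [huIcc]; exact hIoi)).mul
        hψ'cont.continuousOn).intervalIntegrable
    have hsplit : (∫ x in p..q, (G' x * ψ x + G x * deriv ψ x))
        = (∫ x in p..q, G' x * ψ x) + ∫ x in p..q, G x * deriv ψ x :=
      intervalIntegral.integral_add hi1 hi2
    rw [e1, e2]
    linear_combination hQ - hsplit

lemma isWeakDerivOn_congr_left {g₁ g₂ g' : ℝ → ℂ}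
    (h : ∀ t ∈ Set.Ioi (0 : ℝ), g₁ t = g₂ t)
    (h2 : IsWeakDerivOn g₂ g') : IsWeakDerivOn g₁ g' := by
  intro ψ hψ hψc hψs
  rw [setIntegral_congr_fun measurableSet_Ioi
    (fun t ht => by simp only [h t ht] : Set.EqOn (fun t => g₁ t * deriv ψ t)
      (fun t => g₂ t * deriv ψ t) (Set.Ioi 0))]
  exact h2 ψ hψ hψc hψs

end MExAux

/-- The oscillating multiplier `m_{θ,β}` belongs to the class `𝓜(θ,β)`: it is supported in
`{λ : λ^θ ≥ 1}`, satisfies `sup_{λ>0} |m_{θ,β}(ν^j λ) φ(λ)| ≤ C ν^{-jθβ/2}` for `jθ > 0`,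
and `‖(m_{θ,β})^j‖_{L²_s(ℝ₊)} ≤ C_s ν^{jθ(2s-β)/2}` for every `s ∈ ℕ` and `jθ > 0`. -/
theorem statement0 (ν : ℝ) (hν : 1 < ν) (φ : ℝ → ℝ) (hφ : ContDiff ℝ (⊤ : ℕ∞) φ)
    (hφsupp : Function.support φ ⊆ Set.Icc ν⁻¹ ν)
    (hφsum : ∀ t : ℝ, 0 < t → ∑' j : ℤ, φ (ν ^ (-j) * t) = 1)
    (θ β : ℝ) (hθ : θ ≠ 0) (hβ : 0 ≤ β) :
    MemMClass ν φ θ β (mExample θ β) := by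
  classical
  have hν0 : (0 : ℝ) < ν := lt_trans one_pos hν
  have hinv0 : (0 : ℝ) < ν⁻¹ := inv_pos.2 hν0
  have hIcc : Set.Icc ν⁻¹ ν ⊆ Set.Ioi (0 : ℝ) := fun x hx => lt_of_lt_of_le hinv0 hx.1
  have hsupp : ∀ t ∉ Set.Icc ν⁻¹ ν, φ t = 0 := fun t ht => by
    by_contra h
    exact ht (hφsupp (Function.mem_support.2 h))
  have hvol : (0 : ℝ) ≤ ν - ν⁻¹ := by
    have : ν⁻¹ < 1 := inv_lt_one_of_one_lt₀ hν
    linarith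
  refine ⟨?_, ?_, ?_⟩
  · intro t ht
    unfold mExample
    rw [if_neg]
    rintro ⟨h1, h2⟩
    exact ht ⟨h1.le, h2⟩
  · -- L∞ bound
    obtain ⟨Mφ, hMφ⟩ := (isCompact_Icc (a := ν⁻¹) (b := ν)).exists_bound_of_continuousOn
      (hφ.continuous.continuousOn)
    set r : ℝ := -(θ * β) / 2 with hr
    have hrpos : (0 : ℝ) < ν ^ |r| := Real.rpow_pos_of_pos hν0 _
    refine ⟨(max Mφ 0 + 1) * ν ^ |r|, by positivity, ?_⟩
    intro j hjθ t ht0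
    have hlam0 : 0 < (ν : ℝ) ^ j * t := mul_pos (zpow_pos hν0 j) ht0
    rw [norm_mul]
    have hrhs : ν ^ ((j : ℝ) * r) = ν ^ (-((j : ℝ) * θ * β) / 2) := by
      congr 1
      rw [hr]; ring
    by_cases hφt : φ t = 0
    · rw [hφt]
      simp only [Complex.ofReal_zero, norm_zero, mul_zero]
      positivity
    · have htI : t ∈ Set.Icc ν⁻¹ ν := hφsupp (Function.mem_support.2 hφt)
      have h1 : ‖mExample θ β (ν ^ j * t)‖ ≤ ((ν : ℝ) ^ j * t) ^ r := by
        unfold mExample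
        split
        · rw [norm_mul]
          have hE : ‖Complex.exp (Complex.I * ((((ν : ℝ) ^ j * t) ^ θ : ℝ) : ℂ))‖ = 1 := by
            rw [Complex.norm_exp]; simp
          rw [hE, one_mul, Complex.norm_real, Real.norm_eq_abs,
            abs_of_nonneg (Real.rpow_nonneg hlam0.le _)]
        · simp [Real.rpow_nonneg hlam0.le]
      have h2 : ((ν : ℝ) ^ j * t) ^ r = ν ^ ((j : ℝ) * r) * t ^ r := by
        rw [Real.mul_rpow (zpow_pos hν0 j).le ht0.le, ← Real.rpow_intCast ν j,
          ← Real.rpow_mul hν0.le]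
      have h3 : t ^ r ≤ ν ^ |r| := MExAux.rpow_base_bound hν htI r
      have h4 : ‖((φ t : ℝ) : ℂ)‖ ≤ max Mφ 0 := by
        rw [Complex.norm_real]
        exact le_max_of_le_left (hMφ t htI)
      calc ‖mExample θ β (ν ^ j * t)‖ * ‖((φ t : ℝ) : ℂ)‖
          ≤ (((ν : ℝ) ^ j * t) ^ r) * max Mφ 0 := by
            apply mul_le_mul h1 h4 (norm_nonneg _) (Real.rpow_nonneg hlam0.le r)
        _ = ν ^ ((j : ℝ) * r) * t ^ r * max Mφ 0 := by rw [h2]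
        _ ≤ ν ^ ((j : ℝ) * r) * ν ^ |r| * (max Mφ 0 + 1) := by
            have h5 : (0 : ℝ) ≤ ν ^ ((j : ℝ) * r) := (Real.rpow_pos_of_pos hν0 _).le
            have h6 : (0 : ℝ) ≤ max Mφ 0 := le_max_right _ _
            have h7 : (0 : ℝ) ≤ t ^ r := Real.rpow_nonneg (lt_of_lt_of_le hinv0 htI.1).le r
            exact mul_le_mul (mul_le_mul_of_nonneg_left h3 h5) (by linarith) h6 (by positivity)
        _ = (max Mφ 0 + 1) * ν ^ |r| * ν ^ (-((j : ℝ) * θ * β) / 2) := by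
            rw [← hrhs]; ring
  · -- Sobolev bounds
    intro s
    have hbd := MExAux.iter_FA_bound θ β φ ν hν hφ hsupp
    choose M hM0 hMb using hbd
    have hC0 : (0 : ℝ) ≤ ∑ k ∈ Finset.range (s + 1), (M k) ^ 2 * (ν - ν⁻¹) :=
      Finset.sum_nonneg fun k _ => mul_nonneg (sq_nonneg _) hvol
    refine ⟨(∑ k ∈ Finset.range (s + 1), (M k) ^ 2 * (ν - ν⁻¹)) + 1, by linarith, ?_⟩
    intro j hjθ
    set a : ℝ := ν ^ ((j : ℝ) * θ) with ha
    set c : ℝ := ν ^ (-((j : ℝ) * θ * β) / 2) with hcdef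
    have ha1 : 1 ≤ a := Real.one_le_rpow hν.le hjθ.le
    have hc0 : 0 < c := Real.rpow_pos_of_pos hν0 _
    set F : ℝ → ℂ := MExAux.FA θ β φ a with hF
    set g : ℝ → ℂ := fun t => mExample θ β (ν ^ j * t) * ((φ t : ℝ) : ℂ) with hg
    have hgF : ∀ t ∈ Set.Ioi (0 : ℝ), g t = (c : ℂ) * F t := by
      intro t ht
      have ht0 : (0 : ℝ) < t := ht
      by_cases hφt : φ t = 0
      · show mExample θ β (ν ^ j * t) * ((φ t : ℝ) : ℂ) = (c : ℂ) * F t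
        rw [hF]
        unfold MExAux.FA MExAux.wA
        rw [hφt]
        simp
      · have htI : t ∈ Set.Icc ν⁻¹ ν := hφsupp (Function.mem_support.2 hφt)
        have hlam0 : 0 < (ν : ℝ) ^ j * t := mul_pos (zpow_pos hν0 j) ht0
        have hcond : 1 ≤ ((ν : ℝ) ^ j * t) ^ θ := MExAux.cond_holds hν hjθ htI
        have hm : mExample θ β (ν ^ j * t)
            = Complex.exp (Complex.I * ((((ν : ℝ) ^ j * t) ^ θ : ℝ) : ℂ)) *
              (((((ν : ℝ) ^ j * t) ^ (-(θ * β) / 2) : ℝ)) : ℂ) := if_pos ⟨hlam0, hcond⟩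
        have e1 : ((ν : ℝ) ^ j * t) ^ θ = a * t ^ θ := by
          rw [Real.mul_rpow (zpow_pos hν0 j).le ht0.le, ← Real.rpow_intCast ν j,
            ← Real.rpow_mul hν0.le]
        have e2 : ((ν : ℝ) ^ j * t) ^ (-(θ * β) / 2) = c * t ^ (-(θ * β) / 2) := by
          rw [Real.mul_rpow (zpow_pos hν0 j).le ht0.le]
          congr 1
          rw [← Real.rpow_intCast ν j, ← Real.rpow_mul hν0.le, hcdef]
          congr 1
          ring
        show mExample θ β (ν ^ j * t) * ((φ t : ℝ) : ℂ) = (c : ℂ) * F t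
        rw [hm, e1, e2, hF]
        unfold MExAux.FA MExAux.wA
        push_cast
        ring
    refine ⟨fun k => if k = 0 then g else fun t => (c : ℂ) * deriv^[k] F t, ⟨rfl, ?_⟩, ?_⟩
    · -- weak derivative chain
      have hWD : ∀ k : ℕ, IsWeakDerivOn (fun t => (c : ℂ) * deriv^[k] F t)
          (fun t => (c : ℂ) * deriv^[k + 1] F t) := by
        intro k
        apply MExAux.isWeakDerivOn_of_hasDerivAt
        · intro t ht
          have hd : DifferentiableAt ℝ (deriv^[k] F) t :=
            ((MExAux.contDiffOn_iter_FA θ β φ hφ a k).differentiableOn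
              (by simp)).differentiableAt (isOpen_Ioi.mem_nhds ht)
          have hda : HasDerivAt (deriv^[k] F) (deriv^[k + 1] F t) t := by
            rw [Function.iterate_succ_apply']
            exact hd.hasDerivAt
          exact hda.const_mul _
        · exact continuousOn_const.mul
            (MExAux.contDiffOn_iter_FA θ β φ hφ a (k + 1)).continuousOn
      intro k hk
      match k with
      | 0 => exact MExAux.isWeakDerivOn_congr_left (fun t ht => hgF t ht) (hWD 0)
      | k + 1 => exact hWD (k + 1)
    · -- norm bound
      have hXpos : (0 : ℝ) < ν ^ ((j : ℝ) * θ * (2 * (s : ℝ) - β)) :=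
        Real.rpow_pos_of_pos hν0 _
      have hterm : ∀ k, k ≤ s → (∫ t in Set.Ioi (0 : ℝ), ‖(c : ℂ) * deriv^[k] F t‖ ^ 2)
          ≤ (M k) ^ 2 * (ν - ν⁻¹) * ν ^ ((j : ℝ) * θ * (2 * (s : ℝ) - β)) := by
        intro k hks
        have hcont : ContinuousOn (fun t => (c : ℂ) * deriv^[k] F t) (Set.Ioi 0) :=
          continuousOn_const.mul (MExAux.contDiffOn_iter_FA θ β φ hφ a k).continuousOn
        have hvan : ∀ t ∉ Set.Icc ν⁻¹ ν, (c : ℂ) * deriv^[k] F t = 0 := fun t ht => by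
          rw [MExAux.iter_FA_vanish θ β φ ν hsupp a k t ht, mul_zero]
        have hBa : ∀ t ∈ Set.Ioi (0 : ℝ), ‖(c : ℂ) * deriv^[k] F t‖ ≤ c * (M k * a ^ k) := by
          intro t ht
          rw [norm_mul, Complex.norm_real, Real.norm_eq_abs, abs_of_nonneg hc0.le]
          exact mul_le_mul_of_nonneg_left (hMb k a ha1 t ht) hc0.le
        refine le_trans (MExAux.sq_integral_le hν hcont hvan hBa) ?_
        have hsq : (c * (M k * a ^ k)) ^ 2 * (ν - ν⁻¹)
            = (M k) ^ 2 * (ν - ν⁻¹) * (c * a ^ k) ^ 2 := by ring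
        rw [hsq]
        have hpow : (c * a ^ k) ^ 2 = ν ^ ((j : ℝ) * θ * (2 * (k : ℝ) - β)) := by
          rw [ha, hcdef, ← Real.rpow_natCast (ν ^ ((j : ℝ) * θ)) k, ← Real.rpow_mul hν0.le,
            ← Real.rpow_add hν0, ← Real.rpow_natCast (ν ^ (-((j : ℝ) * θ * β) / 2 + (j : ℝ) * θ * (k : ℝ))) 2,
            ← Real.rpow_mul hν0.le]
          congr 1
          push_cast
          ring
        rw [hpow]
        have hexp : (j : ℝ) * θ * (2 * (k : ℝ) - β) ≤ (j : ℝ) * θ * (2 * (s : ℝ) - β) := by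
          have hks' : (k : ℝ) ≤ (s : ℝ) := Nat.cast_le.2 hks
          nlinarith
        exact mul_le_mul_of_nonneg_left (Real.rpow_le_rpow_of_exponent_le hν.le hexp)
          (mul_nonneg (sq_nonneg _) hvol)
      unfold sobNormSq
      have hsum : ∀ k ∈ Finset.range (s + 1),
          (∫ t in Set.Ioi (0 : ℝ),
            ‖(if k = 0 then g else fun t => (c : ℂ) * deriv^[k] F t) t‖ ^ 2)
          ≤ (M k) ^ 2 * (ν - ν⁻¹) * ν ^ ((j : ℝ) * θ * (2 * (s : ℝ) - β)) := by
        intro k hkmem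
        have hks : k ≤ s := Nat.lt_succ_iff.1 (Finset.mem_range.1 hkmem)
        match k with
        | 0 =>
          have heq : (∫ t in Set.Ioi (0 : ℝ), ‖g t‖ ^ 2)
              = ∫ t in Set.Ioi (0 : ℝ), ‖(c : ℂ) * deriv^[0] F t‖ ^ 2 := by
            apply setIntegral_congr_fun measurableSet_Ioi
            intro t ht
            show ‖g t‖ ^ 2 = ‖(c : ℂ) * deriv^[0] F t‖ ^ 2
            rw [hgF t ht]
            rfl
          show (∫ t in Set.Ioi (0 : ℝ), ‖g t‖ ^ 2) ≤ _
          rw [heq]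
          exact hterm 0 (Nat.zero_le s)
        | k + 1 =>
          show (∫ t in Set.Ioi (0 : ℝ), ‖(c : ℂ) * deriv^[k + 1] F t‖ ^ 2) ≤ _
          exact hterm (k + 1) hks
      refine le_trans (Finset.sum_le_sum hsum) ?_
      rw [← Finset.sum_mul]
      nlinarith [hXpos, hC0]
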